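/- For every real number λ and every integer k ≥ 0, the degenerate Bell numbers satisfy the recurrence φ_{k+1,λ} = Σ_{l=0}^{k} C(k,l) (1−λ)_{k−l,λ} φ_{l,λ}, where C(k,l) is the binomial coefficient. -/
import Mathlib


open Finset

/-- Generalized falling factorial `(x)_{n,λ} = x(x-λ)⋯(x-(n-1)λ)`. -/
noncomputable def dfall (lam x : ℝ) (n : ℕ) : ℝ := ∏ i ∈ Finset.range n, (x - i * lam)

/-- Ordinary falling factorial `(x)_n = x(x-1)⋯(x-n+1)`. -/
noncomputable def ffall (x : ℝ) (n : ℕ) : ℝ := ∏ i ∈ Finset.range n, (x - i)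

/-- Degenerate Stirling numbers of the second kind, defined by the recurrence
`S_{2,λ}(0,0)=1`, `S_{2,λ}(n,k)=0` for `k>n` (and `k<0`), and
`S_{2,λ}(n+1,k) = S_{2,λ}(n,k-1) + (k-nλ) S_{2,λ}(n,k)`. -/
noncomputable def dStir (lam : ℝ) : ℕ → ℕ → ℝ
  | 0, 0 => 1
  | 0, _ + 1 => 0
  | n + 1, 0 => ((0 : ℝ) - n * lam) * dStir lam n 0
  | n + 1, k + 1 => dStir lam n k + (((k : ℝ) + 1) - n * lam) * dStir lam n (k + 1)

/-- Degenerate Bell polynomials `φ_{n,λ}(x) = Σ_{k=0}^n S_{2,λ}(n,k) x^k`. -/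
noncomputable def dBell (lam x : ℝ) (n : ℕ) : ℝ :=
  ∑ k ∈ Finset.range (n + 1), dStir lam n k * x ^ k

lemma dStir_succ (lam : ℝ) (n k : ℕ) :
    dStir lam (n + 1) k
      = (if k = 0 then 0 else dStir lam n (k - 1)) + ((k : ℝ) - n * lam) * dStir lam n k := by
  cases k with
  | zero => simp [dStir]
  | succ k => simp [dStir]

lemma dStir_eq_zero (lam : ℝ) : ∀ n k, n < k → dStir lam n k = 0 := by
  intro n
  induction n with
  | zero => intro k hk; match k, hk with | k + 1, _ => simp [dStir]
  | succ n ih =>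
    intro k hk
    match k, hk with
    | k + 1, hk =>
      have h1 : n < k := Nat.lt_of_succ_lt_succ hk
      rw [dStir, ih k h1, ih (k+1) (Nat.lt_succ_of_lt h1)]
      ring

lemma dStir_zero_right (lam : ℝ) (n : ℕ) : dStir lam (n + 1) 0 = 0 := by
  induction n with
  | zero => simp [dStir]
  | succ n ih => rw [dStir, ih]; ring

lemma dfall_succ (lam x : ℝ) (m : ℕ) :
    dfall lam x (m + 1) = (x - m * lam) * dfall lam x m := by
  rw [dfall, Finset.prod_range_succ, mul_comm]; rfl

lemma stirKey (lam : ℝ) : ∀ n k, dStir lam (n + 1) (k + 1)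
    = ∑ l ∈ Finset.range (n + 1),
        (n.choose l : ℝ) * dfall lam (1 - lam) (n - l) * dStir lam l k := by
  intro n
  induction n with
  | zero => intro k; simp [dStir, dfall]
  | succ n ih =>
    intro k
    have rhs :
        ∑ l ∈ Finset.range (n + 2),
            ((n+1).choose l : ℝ) * dfall lam (1 - lam) (n + 1 - l) * dStir lam l k
          = (∑ l ∈ Finset.range (n + 1),
              (n.choose l : ℝ) * dfall lam (1 - lam) (n + 1 - l) * dStir lam l k)
            + ∑ l ∈ Finset.range (n + 1),
              (n.choose l : ℝ) * dfall lam (1 - lam) (n - l) * dStir lam (l + 1) k := by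
      rw [Finset.sum_range_succ' (fun l => ((n+1).choose l : ℝ) * dfall lam (1 - lam) (n + 1 - l) * dStir lam l k) (n+1),
          Finset.sum_range_succ' (fun l => ((n).choose l : ℝ) * dfall lam (1 - lam) (n + 1 - l) * dStir lam l k) n]
      have pointwise : ∀ l ∈ Finset.range (n+1),
          ((n+1).choose (l+1) : ℝ) * dfall lam (1 - lam) (n + 1 - (l+1)) * dStir lam (l+1) k
          = (n.choose (l+1) : ℝ) * dfall lam (1 - lam) (n + 1 - (l+1)) * dStir lam (l+1) k
            + (n.choose l : ℝ) * dfall lam (1 - lam) (n - l) * dStir lam (l + 1) k := by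
        intro l hl
        have h2 : n + 1 - (l + 1) = n - l := by omega
        rw [h2, Nat.choose_succ_succ]
        push_cast; ring
      rw [Finset.sum_congr rfl pointwise, Finset.sum_add_distrib,
          Finset.sum_range_succ (fun l => ((n).choose (l+1) : ℝ) * dfall lam (1 - lam) (n + 1 - (l+1)) * dStir lam (l+1) k) n]
      simp [Nat.choose_succ_self]
      ring
    have expand : ∀ l ∈ Finset.range (n+1),
        (n.choose l : ℝ) * dfall lam (1 - lam) (n + 1 - l) * dStir lam l k
        + (n.choose l : ℝ) * dfall lam (1 - lam) (n - l) * dStir lam (l + 1) k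
      = (n.choose l : ℝ) * dfall lam (1 - lam) (n - l)
          * (if k = 0 then 0 else dStir lam l (k-1))
        + (((k:ℝ)+1) - ((n:ℝ)+1) * lam)
          * ((n.choose l : ℝ) * dfall lam (1 - lam) (n - l) * dStir lam l k) := by
      intro l hl
      have hln : l ≤ n := Nat.lt_succ_iff.mp (Finset.mem_range.mp hl)
      have h1 : n + 1 - l = (n - l) + 1 := by omega
      have hc : ((n - l : ℕ) : ℝ) = (n : ℝ) - l := Nat.cast_sub hln
      rw [h1, dfall_succ, dStir_succ lam l k, hc]
      ring
    rw [rhs, ← Finset.sum_add_distrib, Finset.sum_congr rfl expand,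
        Finset.sum_add_distrib, ← Finset.mul_sum, dStir_succ lam (n+1) (k+1)]
    simp only [Nat.succ_ne_zero, if_false, Nat.add_sub_cancel]
    rw [ih k]
    cases k with
    | zero =>
      simp [dStir_zero_right]
    | succ k =>
      rw [ih k]
      simp only [Nat.succ_ne_zero, if_false, Nat.add_sub_cancel]
      push_cast; ring_nf

/-- the degenerate Bell numbers `φ_{n,λ} = φ_{n,λ}(1)` satisfy
`φ_{k+1,λ} = Σ_{l=0}^{k} C(k,l) (1−λ)_{k−l,λ} φ_{l,λ}`. -/
theorem dBellNumber_recurrence (lam : ℝ) (k : ℕ) :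
    dBell lam 1 (k + 1)
      = ∑ l ∈ Finset.range (k + 1),
          (k.choose l : ℝ) * dfall lam (1 - lam) (k - l) * dBell lam 1 l := by
  have hBell : ∀ l ∈ Finset.range (k + 1),
      dBell lam 1 l = ∑ j ∈ Finset.range (k + 1), dStir lam l j := by
    intro l hl
    have hlk : l + 1 ≤ k + 1 := Finset.mem_range.mp hl
    rw [dBell]
    simp only [one_pow, mul_one]
    refine Finset.sum_subset (Finset.range_subset_range.mpr hlk) ?_
    intro j _ hj
    exact dStir_eq_zero lam l j (by simp at hj ⊢; omega)
  calc dBell lam 1 (k + 1)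
      = ∑ j ∈ Finset.range (k + 2), dStir lam (k+1) j := by
        rw [dBell]; simp
    _ = ∑ j ∈ Finset.range (k + 1), dStir lam (k+1) (j+1) + dStir lam (k+1) 0 :=
        Finset.sum_range_succ' _ (k+1)
    _ = ∑ j ∈ Finset.range (k + 1), ∑ l ∈ Finset.range (k + 1),
          (k.choose l : ℝ) * dfall lam (1 - lam) (k - l) * dStir lam l j := by
        rw [dStir_zero_right, add_zero]
        exact Finset.sum_congr rfl fun j _ => stirKey lam k j
    _ = ∑ l ∈ Finset.range (k + 1),
          (k.choose l : ℝ) * dfall lam (1 - lam) (k - l) * dBell lam 1 l := by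
        rw [Finset.sum_comm]
        refine Finset.sum_congr rfl fun l hl => ?_
        rw [hBell l hl, Finset.mul_sum]
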